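/- Let K(r, V) = inf over random variables Π with E[Π] ≥ r, Var(Π) ≤ V of E[Φ(Π)], and suppose a minimizer P_Π exists with Var(Π) > 0 for Π ~ P_Π. Define, for β ≥ 0 and σ := √(V(Γ)) > 0, L₂(r, β) = inf over feasible P_Π of [ E[Φ(Π)] − ∫_{β/σ}^∞ φ(x)·( E[Φ(√2·Π − x)] − E[Φ(Π/√2 + r/(√2·σ) − x)] ) dx ]. If ‖√2·Π‖_∞ > ‖Π/√2 + r/(√2σ)‖_∞ for the minimizer Π (which holds whenever Var(Π) > 0 and E[Π] = r/σ), then for sufficiently large β, L₂(r, β) < K(r/σ, C) where C is the variance bound, i.e., the integral term is strictly positive for large β. -/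

import Mathlib

/-!
Let `M` be the largest atom of the finitely supported minimiser `μ`, with mean `m = r/σ`.
Positive variance forces `m < M` (Bhatia–Davis), so `Π/√2 + m/√2` stays a.s. below
`b = M/√2 + m/√2 < √2 M`, while `√2 Π` has an atom at `√2 M`. Gaussian tails at different heights
separate, `Φ(b - x) = o(Φ(√2 M - x))` as `x → ∞` (Mills' ratio from above, the mass of a fixed
interval from below), hence `E Φ(Π/√2 + m/√2 - x) < E Φ(√2 Π - x)` for all large `x`. The integral
subtracted in `L₂` is then positive once `β/σ` is large, and evaluating `L₂` at `μ` gives a value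
below `E Φ(Π) = K`.
-/

open MeasureTheory ProbabilityTheory

/-- Standard Gaussian density. -/
noncomputable def gaussPDF (x : ℝ) : ℝ := Real.exp (-(x ^ 2) / 2) / Real.sqrt (2 * Real.pi)

/-- Standard Gaussian CDF. -/
noncomputable def gaussCDF (x : ℝ) : ℝ := ∫ t in Set.Iic x, gaussPDF t

/-- The feasible set `F_{K}`: laws of random variables with mean exactly `m`, variance at
most `Vb`, and support on at most 3 points. -/
def Feas3 (m Vb : ℝ) : Set (Measure ℝ) :=
  {μ | IsProbabilityMeasure μ ∧ (∫ x, x ∂μ) = m ∧ variance id μ ≤ Vb ∧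
    ∃ s : Finset ℝ, s.card ≤ 3 ∧ μ (↑s : Set ℝ)ᶜ = 0}

/-- `K` as an infimum over the feasible set. -/
noncomputable def Kc (m Vb : ℝ) : ℝ :=
  sInf {e : ℝ | ∃ μ ∈ Feas3 m Vb, e = ∫ x, gaussCDF x ∂μ}

/-- The function `L₂(r, β)` of the feedback analysis. -/
noncomputable def L2 (r σ Vb β : ℝ) : ℝ :=
  sInf {e : ℝ | ∃ μ ∈ Feas3 (r / σ) Vb, e =
    (∫ x, gaussCDF x ∂μ) -
      ∫ x in Set.Ioi (β / σ), gaussPDF x *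
        ((∫ y, gaussCDF (Real.sqrt 2 * y - x) ∂μ) -
          ∫ y, gaussCDF (y / Real.sqrt 2 + r / (Real.sqrt 2 * σ) - x) ∂μ)}

open Real Set Filter

lemma gaussPDF_eq_gaussianPDFReal : gaussPDF = gaussianPDFReal 0 1 := by
  ext x
  simp [gaussPDF, gaussianPDFReal_def, div_eq_inv_mul]

lemma gaussPDF_pos (x : ℝ) : 0 < gaussPDF x := by
  unfold gaussPDF
  positivity

lemma gaussPDF_neg (x : ℝ) : gaussPDF (-x) = gaussPDF x := by
  simp [gaussPDF]

lemma integrable_gaussPDF : Integrable gaussPDF :=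
  gaussPDF_eq_gaussianPDFReal ▸ integrable_gaussianPDFReal 0 1

lemma integral_gaussPDF : ∫ x, gaussPDF x = 1 :=
  gaussPDF_eq_gaussianPDFReal ▸ integral_gaussianPDFReal_eq_one 0 one_ne_zero

lemma gaussPDF_sub_eq_mul_exp (x b c : ℝ) :
    gaussPDF (x - c) = gaussPDF (x - b) * exp ((c - b) * x - (c ^ 2 - b ^ 2) / 2) := by
  simp only [gaussPDF]
  rw [div_mul_eq_mul_div, ← exp_add]
  ring_nf

lemma gaussCDF_nonneg (x : ℝ) : 0 ≤ gaussCDF x :=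
  setIntegral_nonneg measurableSet_Iic fun t _ => (gaussPDF_pos t).le

lemma gaussCDF_le_one (x : ℝ) : gaussCDF x ≤ 1 :=
  integral_gaussPDF ▸ setIntegral_le_integral integrable_gaussPDF
    (Eventually.of_forall fun t => (gaussPDF_pos t).le)

lemma gaussCDF_mono : Monotone gaussCDF := fun _ _ hxy =>
  setIntegral_mono_set integrable_gaussPDF.integrableOn
    (Eventually.of_forall fun t => (gaussPDF_pos t).le)
    (LE.le.eventuallyLE (Iic_subset_Iic.mpr hxy))

lemma gaussCDF_neg_le_gaussPDF_div {z : ℝ} (hz : 0 < z) :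
    gaussCDF (-z) ≤ gaussPDF z / z := by
  -- `-t²/2 ≤ z²/2 + z t`, i.e. `0 ≤ (t + z)²/2`
  have hle : ∀ t, gaussPDF t ≤ gaussPDF z * exp (z * z) * exp (z * t) := fun t => by
    unfold gaussPDF
    rw [div_mul_eq_mul_div, div_mul_eq_mul_div, ← exp_add, ← exp_add]
    gcongr
    nlinarith [sq_nonneg (t + z)]
  calc gaussCDF (-z) ≤ ∫ t in Iic (-z), gaussPDF z * exp (z * z) * exp (z * t) :=
        setIntegral_mono integrable_gaussPDF.integrableOn
          ((integrableOn_exp_mul_Iic hz _).const_mul _) hle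
    _ = gaussPDF z / z := by
        rw [integral_const_mul, integral_exp_mul_Iic hz, mul_neg, exp_neg]
        field_simp

lemma mul_gaussPDF_le_gaussCDF {c ε : ℝ} (hc : c ≤ 0) (hε : 0 ≤ ε) :
    ε * gaussPDF (c - ε) ≤ gaussCDF c :=
  calc ε * gaussPDF (c - ε) = ∫ _ in Icc (c - ε) c, gaussPDF (c - ε) := by
        simp [hε]
    _ ≤ ∫ t in Icc (c - ε) c, gaussPDF t :=
        setIntegral_mono_on (integrableOn_const (by simp)) integrable_gaussPDF.integrableOn
          measurableSet_Icc fun t ht => by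
            have : t ^ 2 ≤ (c - ε) ^ 2 := by nlinarith [ht.1, ht.2]
            unfold gaussPDF
            gcongr
    _ ≤ gaussCDF c := setIntegral_mono_set integrable_gaussPDF.integrableOn
        (Eventually.of_forall fun t => (gaussPDF_pos t).le)
        (LE.le.eventuallyLE Icc_subset_Iic_self)

lemma eventually_gaussCDF_sub_lt_mul {a b p : ℝ} (hba : b < a) (hp : 0 < p) :
    ∀ᶠ x in atTop, gaussCDF (b - x) < p * gaussCDF (a - x) := by
  set c := (a + b) / 2 with hc
  have hbc : 0 < c - b := by linarith
  have hca : 0 < a - c := by linarith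
  -- `φ(x - c) / φ(x - b) → ∞` beats the constant `p (a - c)` of the lower bound
  have hexp : Tendsto (fun x => exp ((c - b) * x - (c ^ 2 - b ^ 2) / 2)) atTop atTop :=
    tendsto_exp_atTop.comp <| tendsto_atTop_add_const_right _ _ <| tendsto_id.const_mul_atTop hbc
  filter_upwards [hexp.eventually_gt_atTop (p * (a - c))⁻¹, eventually_ge_atTop (max a (b + 1))]
    with x hx hmax
  have hxa : a ≤ x := le_of_max_le_left hmax
  have hxb : b + 1 ≤ x := le_of_max_le_right hmax
  have hlarge : 1 < p * (a - c) * exp ((c - b) * x - (c ^ 2 - b ^ 2) / 2) :=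
    (inv_lt_iff_one_lt_mul₀' (by positivity)).1 hx
  calc gaussCDF (b - x) ≤ gaussPDF (x - b) / (x - b) := by
        simpa using gaussCDF_neg_le_gaussPDF_div (z := x - b) (by linarith)
    _ ≤ gaussPDF (x - b) := div_le_self (gaussPDF_pos _).le (by linarith)
    _ < p * ((a - c) * gaussPDF (x - c)) := by
        rw [gaussPDF_sub_eq_mul_exp x b c]
        nlinarith [gaussPDF_pos (x - b)]
    _ ≤ p * gaussCDF (a - x) := by
        gcongr
        simpa [← gaussPDF_neg (x - c)] using
          mul_gaussPDF_le_gaussCDF (c := a - x) (by linarith) hca.le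

section

variable {α : Type*} [MeasurableSpace α] {μ : Measure α}

lemma integrable_gaussCDF_comp [IsFiniteMeasure μ] {f : α → ℝ} (hf : AEMeasurable f μ) :
    Integrable (fun y => gaussCDF (f y)) μ :=
  (integrable_const 1).mono' (gaussCDF_mono.measurable.comp_aemeasurable hf).aestronglyMeasurable
    (Eventually.of_forall fun y => by
      rw [norm_of_nonneg (gaussCDF_nonneg _)]
      exact gaussCDF_le_one _)

lemma integral_gaussCDF_comp_mem_Icc [IsProbabilityMeasure μ] (f : α → ℝ) :
    ∫ y, gaussCDF (f y) ∂μ ∈ Icc 0 1 := by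
  refine ⟨integral_nonneg fun y => gaussCDF_nonneg _, ?_⟩
  by_cases hf : Integrable (fun y => gaussCDF (f y)) μ
  · simpa using integral_mono hf (integrable_const 1) fun y => gaussCDF_le_one (f y)
  · simp [integral_undef hf]

lemma abs_integral_gaussCDF_comp_sub_le_one [IsProbabilityMeasure μ] (f g : α → ℝ) :
    |∫ y, gaussCDF (f y) ∂μ - ∫ y, gaussCDF (g y) ∂μ| ≤ 1 := by
  obtain ⟨hf₀, hf₁⟩ := integral_gaussCDF_comp_mem_Icc (μ := μ) f
  obtain ⟨hg₀, hg₁⟩ := integral_gaussCDF_comp_mem_Icc (μ := μ) g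
  exact abs_le.2 ⟨by linarith, by linarith⟩

lemma antitone_integral_gaussCDF_sub [IsFiniteMeasure μ] {f : α → ℝ} (hf : AEMeasurable f μ) :
    Antitone fun x => ∫ y, gaussCDF (f y - x) ∂μ := fun _ _ hxx' =>
  integral_mono (integrable_gaussCDF_comp (hf.sub_const _))
    (integrable_gaussCDF_comp (hf.sub_const _)) fun _ => gaussCDF_mono (by linarith)

lemma eventually_integral_gaussCDF_sub_lt [MeasurableSingletonClass α] [IsProbabilityMeasure μ]
    {f g : α → ℝ} (hf : AEMeasurable f μ) (hg : AEMeasurable g μ) {M : α} (hM : μ {M} ≠ 0)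
    {b : ℝ} (hgb : ∀ᵐ y ∂μ, g y ≤ b) (hb : b < f M) :
    ∀ᶠ x in atTop, ∫ y, gaussCDF (g y - x) ∂μ < ∫ y, gaussCDF (f y - x) ∂μ := by
  have hp : 0 < μ.real {M} := ENNReal.toReal_pos hM (measure_ne_top _ _)
  filter_upwards [eventually_gaussCDF_sub_lt_mul hb hp] with x hx
  calc ∫ y, gaussCDF (g y - x) ∂μ ≤ ∫ _, gaussCDF (b - x) ∂μ :=
        integral_mono_ae (integrable_gaussCDF_comp (hg.sub_const x)) (integrable_const _)
          (hgb.mono fun y hy => gaussCDF_mono (by linarith))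
    _ < μ.real {M} * gaussCDF (f M - x) := by simpa using hx
    _ = ∫ y in {M}, gaussCDF (f y - x) ∂μ := by rw [integral_singleton, smul_eq_mul]
    _ ≤ ∫ y, gaussCDF (f y - x) ∂μ :=
        setIntegral_le_integral (integrable_gaussCDF_comp (hf.sub_const x))
          (Eventually.of_forall fun _ => gaussCDF_nonneg _)

lemma ae_mem_filter_measure_singleton_ne_zero {s : Finset α} (hs : μ (↑s)ᶜ = 0) :
    ∀ᵐ y ∂μ, y ∈ s.filter (fun z => μ {z} ≠ 0) := by
  have hnull : ∀ᵐ y ∂μ, ∀ z ∈ s, μ {z} = 0 → y ≠ z :=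
    (eventually_all_finset s).2 fun z _ =>
      eventually_imp_distrib_left.2 measure_eq_zero_iff_ae_notMem.1
  filter_upwards [measure_eq_zero_iff_ae_notMem.1 hs, hnull] with y hy hy'
  rw [mem_compl_iff, not_not] at hy
  exact Finset.mem_filter.2 ⟨hy, fun h => hy' y hy h rfl⟩

end

lemma exists_ae_mem_Icc_measure_singleton_ne_zero {μ : Measure ℝ} [NeZero μ] {s : Finset ℝ}
    (hs : μ (↑s)ᶜ = 0) : ∃ a M, μ {M} ≠ 0 ∧ ∀ᵐ y ∂μ, y ∈ Icc a M := by
  set t := s.filter (fun z => μ {z} ≠ 0)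
  have ht := ae_mem_filter_measure_singleton_ne_zero hs
  obtain ⟨y, hy⟩ := ht.exists
  exact ⟨t.min' ⟨y, hy⟩, t.max' ⟨y, hy⟩, (Finset.mem_filter.1 (t.max'_mem _)).2,
    ht.mono fun z hz => ⟨t.min'_le z hz, t.le_max' z hz⟩⟩

lemma integral_lt_of_ae_mem_Icc_of_variance_pos {μ : Measure ℝ} [IsProbabilityMeasure μ]
    {a M : ℝ} (h : ∀ᵐ y ∂μ, y ∈ Icc a M) (hv : 0 < variance id μ) : ∫ y, y ∂μ < M := by
  have hBD : variance id μ ≤ (M - ∫ y, y ∂μ) * ((∫ y, y ∂μ) - a) :=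
    variance_le_sub_mul_sub h aemeasurable_id
  obtain ⟨y, hy⟩ := h.exists
  by_contra! hM
  nlinarith [hy.1.trans hy.2]

lemma integrable_gaussPDF_mul {h : ℝ → ℝ} (hm : AEStronglyMeasurable h) (hb : ∀ x, |h x| ≤ 1) :
    Integrable fun x => gaussPDF x * h x := by
  simpa only [mul_comm] using integrable_gaussPDF.bdd_mul hm (Eventually.of_forall hb)

lemma abs_setIntegral_gaussPDF_mul_le_one {h : ℝ → ℝ} (hb : ∀ x, |h x| ≤ 1) (s : Set ℝ) :
    |∫ x in s, gaussPDF x * h x| ≤ 1 :=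
  calc |∫ x in s, gaussPDF x * h x| ≤ ∫ x in s, gaussPDF x :=
        (norm_eq_abs _).symm.trans_le <|
          norm_integral_le_of_norm_le integrable_gaussPDF.integrableOn <| ae_of_all _ fun x => by
          rw [norm_mul, norm_of_nonneg (gaussPDF_pos x).le]
          exact mul_le_of_le_one_right (gaussPDF_pos x).le (hb x)
    _ ≤ ∫ x, gaussPDF x :=
        setIntegral_le_integral integrable_gaussPDF (ae_of_all _ fun x => (gaussPDF_pos x).le)
    _ = 1 := integral_gaussPDF

lemma setIntegral_Ioi_pos_of_pos {f : ℝ → ℝ} {c : ℝ} (hf : IntegrableOn f (Ioi c))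
    (hpos : ∀ x ∈ Ioi c, 0 < f x) : 0 < ∫ x in Ioi c, f x := by
  rw [setIntegral_pos_iff_support_of_nonneg_ae
    ((ae_restrict_iff' measurableSet_Ioi).2 (ae_of_all _ fun x hx => (hpos x hx).le)) hf,
    inter_eq_right.2 fun x hx => Function.mem_support.2 (hpos x hx).ne']
  simp

lemma L2_le_of_mem_Feas3 {r σ Vb β : ℝ} {μ : Measure ℝ} (hμ : μ ∈ Feas3 (r / σ) Vb) :
    L2 r σ Vb β ≤ (∫ x, gaussCDF x ∂μ) -
      ∫ x in Ioi (β / σ), gaussPDF x *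
        ((∫ y, gaussCDF (√2 * y - x) ∂μ) - ∫ y, gaussCDF (y / √2 + r / (√2 * σ) - x) ∂μ) := by
  refine csInf_le ⟨-1, ?_⟩ ⟨μ, hμ, rfl⟩
  rintro e ⟨ν, hν, rfl⟩
  have := hν.1
  have h₀ := (integral_gaussCDF_comp_mem_Icc (μ := ν) id).1
  have h₁ := abs_le.1 (abs_setIntegral_gaussPDF_mul_le_one
    (fun x => abs_integral_gaussCDF_comp_sub_le_one (μ := ν) (√2 * · - x)
      (· / √2 + r / (√2 * σ) - x)) (Ioi (β / σ)))
  simp only [id] at h₀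
  linarith [h₁.2]

theorem stmt16_general (r σ Vb : ℝ) (hσ : 0 < σ)
    (hmin : ∃ μ ∈ Feas3 (r / σ) Vb,
      (∫ x, gaussCDF x ∂μ) = Kc (r / σ) Vb ∧ 0 < variance id μ) :
    ∃ β₀ : ℝ, ∀ β ≥ β₀, L2 r σ Vb β < Kc (r / σ) Vb := by
  obtain ⟨μ, hμ, hK, hvar⟩ := hmin
  have := hμ.1
  obtain ⟨s, -, hs⟩ := hμ.2.2.2
  obtain ⟨a, M, hM, haM⟩ := exists_ae_mem_Icc_measure_singleton_ne_zero hs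
  have hmean : r / σ < M := hμ.2.1 ▸ integral_lt_of_ae_mem_Icc_of_variance_pos haM hvar
  have hgap : M / √2 + r / (√2 * σ) < √2 * M := by
    have h2 : √2 * M * √2 = 2 * M := by rw [mul_right_comm, mul_self_sqrt zero_le_two]
    rw [mul_comm, ← div_div, ← add_div, div_lt_iff₀ (by positivity), h2]
    linarith
  obtain ⟨x₀, hx₀⟩ := eventually_atTop.1 <|
    eventually_integral_gaussCDF_sub_lt (μ := μ) (f := (√2 * ·)) (g := (· / √2 + r / (√2 * σ)))
      (by fun_prop) (by fun_prop) hM (haM.mono fun y hy => by gcongr; exact hy.2) hgap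
  have hA := antitone_integral_gaussCDF_sub (μ := μ) (f := (√2 * ·)) (by fun_prop)
  have hB := antitone_integral_gaussCDF_sub (μ := μ) (f := (· / √2 + r / (√2 * σ))) (by fun_prop)
  have hint := integrable_gaussPDF_mul (hA.measurable.sub hB.measurable).aestronglyMeasurable
    fun x => abs_integral_gaussCDF_comp_sub_le_one _ _
  refine ⟨σ * x₀, fun β hβ => ?_⟩
  have hx₀β : x₀ ≤ β / σ := (le_div_iff₀' hσ).2 hβ
  have hpos := setIntegral_Ioi_pos_of_pos hint.integrableOn
    fun x hx => mul_pos (gaussPDF_pos x) (sub_pos.2 (hx₀ x (hx₀β.trans (le_of_lt hx))))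
  calc L2 r σ Vb β ≤ _ := L2_le_of_mem_Feas3 hμ
    _ < ∫ x, gaussCDF x ∂μ := sub_lt_self _ hpos
    _ = Kc (r / σ) Vb := hK

/-- If the infimum defining `K(r/σ, Vb)` is attained by a distribution with strictly
positive variance, then for all sufficiently large `β`, `L₂(r, β) < K(r/σ, Vb)`. -/
theorem stmt16 (r σ Vb : ℝ) (hσ : 0 < σ) (hVb : 0 < Vb)
    (hmin : ∃ μ ∈ Feas3 (r / σ) Vb,
      (∫ x, gaussCDF x ∂μ) = Kc (r / σ) Vb ∧ 0 < variance id μ) :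
    ∃ β₀ : ℝ, ∀ β ≥ β₀, L2 r σ Vb β < Kc (r / σ) Vb :=
  stmt16_general r σ Vb hσ hmin
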